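/- For all n×n real matrices L, F, G, the identity ((G, L⊙[[ρ(L_A),F]] − [[L, ρ(L_A)⊙F]] − [[L, a(L⊙F)]] − L⊙ρ(([[L,F]])_A))) = ((L⊙ρ(L_A), [[F,G]])) − ((L, [[ρ(L_A)⊙F + a(L⊙F), G]] + [[F, ρ(L_A)⊙G + a(L⊙G)]])) holds. (This is the key algebraic identity of the Appendix, giving the final form of the Sklyanin bracket carried to gl(n) through the isomorphism Φ.) -/
import Mathlib


open Matrix

noncomputable section

/-- Symmetric part of a matrix. -/
def symPart {n : ℕ} (L : Matrix (Fin n) (Fin n) ℝ) : Matrix (Fin n) (Fin n) ℝ :=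
  (1/2 : ℝ) • (L + Lᵀ)

/-- Antisymmetric part of a matrix. -/
def skewPart {n : ℕ} (L : Matrix (Fin n) (Fin n) ℝ) : Matrix (Fin n) (Fin n) ℝ :=
  (1/2 : ℝ) • (L - Lᵀ)

/-- Commutator. -/
def mcomm {n : ℕ} (A B : Matrix (Fin n) (Fin n) ℝ) : Matrix (Fin n) (Fin n) ℝ :=
  A * B - B * A

/-- Jordan product. -/
def jord {n : ℕ} (A B : Matrix (Fin n) (Fin n) ℝ) : Matrix (Fin n) (Fin n) ℝ :=
  (1/2 : ℝ) • (A * B + B * A)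

/-- The non-standard Lie bracket [[L,M]]. -/
def dbr {n : ℕ} (L M : Matrix (Fin n) (Fin n) ℝ) : Matrix (Fin n) (Fin n) ℝ :=
  mcomm (symPart L) (symPart M) - mcomm (skewPart L) (skewPart M)
    - mcomm (symPart L) (skewPart M) - mcomm (skewPart L) (symPart M)

/-- The commutative product L ⊙ M. -/
def odot {n : ℕ} (L M : Matrix (Fin n) (Fin n) ℝ) : Matrix (Fin n) (Fin n) ℝ :=
  jord (symPart L) (symPart M) - jord (skewPart L) (skewPart M)
    + jord (skewPart L) (symPart M) + jord (symPart L) (skewPart M)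

/-- ρ(L) = L_p − L_n: strictly upper part minus strictly lower part. -/
def rho {n : ℕ} (L : Matrix (Fin n) (Fin n) ℝ) : Matrix (Fin n) (Fin n) ℝ :=
  Matrix.of fun i j => if i < j then L i j else if j < i then -(L i j) else 0

/-- a(L) = ρ(L_S). -/
def aMap {n : ℕ} (L : Matrix (Fin n) (Fin n) ℝ) : Matrix (Fin n) (Fin n) ℝ :=
  rho (symPart L)

/-- The scalar product ((L,M)) = tr(L Mᵀ). -/
def form {n : ℕ} (L M : Matrix (Fin n) (Fin n) ℝ) : ℝ :=
  (L * Mᵀ).trace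

namespace SkAux

variable {n : ℕ}

abbrev Mx (n : ℕ) := Matrix (Fin n) (Fin n) ℝ

lemma dbr_eq (P Y : Mx n) : dbr P Y = mcomm Pᵀ (symPart Y) - mcomm P (skewPart Y) := by
  simp only [dbr, mcomm, symPart, skewPart, transpose_add, transpose_sub, transpose_smul,
    transpose_transpose, smul_add, smul_sub, Matrix.smul_mul, Matrix.mul_smul, smul_smul,
    mul_add, add_mul, mul_sub, sub_mul]
  module

lemma odot_eq (P Y : Mx n) : odot P Y = jord P (symPart Y) + jord Pᵀ (skewPart Y) := by
  simp only [odot, jord, symPart, skewPart, transpose_add, transpose_sub, transpose_smul,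
    transpose_transpose, smul_add, smul_sub, Matrix.smul_mul, Matrix.mul_smul, smul_smul,
    mul_add, add_mul, mul_sub, sub_mul]
  module

lemma symPart_sub (A B : Mx n) : symPart (A - B) = symPart A - symPart B := by
  simp only [symPart, transpose_sub, smul_sub]
  module

lemma skewPart_sub (A B : Mx n) : skewPart (A - B) = skewPart A - skewPart B := by
  simp only [skewPart, transpose_sub, smul_sub]
  module

lemma form_comm (A B : Mx n) : form A B = form B A := by
  unfold form
  rw [← Matrix.trace_transpose, Matrix.transpose_mul, Matrix.transpose_transpose]

lemma form_add_right (X A B : Mx n) : form X (A + B) = form X A + form X B := by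
  simp [form, transpose_add, mul_add]

lemma form_sub_right (X A B : Mx n) : form X (A - B) = form X A - form X B := by
  simp [form, transpose_sub, mul_sub]

lemma form_add_left (X A B : Mx n) : form (A + B) X = form A X + form B X := by
  simp [form, add_mul]

lemma form_sub_left (X A B : Mx n) : form (A - B) X = form A X - form B X := by
  simp [form, sub_mul]

lemma form_smul_right (c : ℝ) (X A : Mx n) : form X (c • A) = c * form X A := by
  simp [form]

lemma form_smul_left (c : ℝ) (X A : Mx n) : form (c • A) X = c * form A X := by
  simp [form, Matrix.smul_mul]

lemma form_mul_left (A X Y : Mx n) : form X (A * Y) = form (Aᵀ * X) Y := by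
  unfold form
  rw [Matrix.transpose_mul, ← Matrix.mul_assoc, Matrix.mul_assoc Aᵀ, Matrix.trace_mul_comm]

lemma form_mul_right (A X Y : Mx n) : form X (Y * A) = form (X * Aᵀ) Y := by
  unfold form
  rw [Matrix.transpose_mul, ← Matrix.mul_assoc]

lemma trace_t_t (X Y : Mx n) : (Xᵀ * Yᵀ).trace = (X * Y).trace := by
  rw [← Matrix.transpose_mul, Matrix.trace_transpose, Matrix.trace_mul_comm]

lemma form_symPart_right (X Y : Mx n) : form X (symPart Y) = form (symPart X) Y := by
  simp only [form, symPart, transpose_add, transpose_smul, transpose_transpose,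
    Matrix.mul_smul, Matrix.smul_mul, mul_add, add_mul, trace_smul, trace_add, smul_eq_mul]
  rw [trace_t_t]

lemma form_skewPart_right (X Y : Mx n) : form X (skewPart Y) = form (skewPart X) Y := by
  simp only [form, skewPart, transpose_sub, transpose_smul, transpose_transpose,
    Matrix.mul_smul, Matrix.smul_mul, mul_sub, sub_mul, trace_smul, trace_sub, smul_eq_mul]
  rw [trace_t_t]

lemma form_jord (A X Y : Mx n) : form X (jord A Y) = form (jord Aᵀ X) Y := by
  unfold jord
  rw [form_smul_right, form_smul_left, form_add_right, form_add_left, form_mul_left,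
    form_mul_right]

lemma form_eq_sum (A B : Mx n) : form A B = ∑ i, ∑ j, A i j * B i j := by
  simp [form, Matrix.trace, Matrix.diag, Matrix.mul_apply, Matrix.transpose_apply]

lemma rho_adjoint (A B : Mx n) : form (rho A) B = form A (rho B) := by
  rw [form_eq_sum, form_eq_sum]
  refine Finset.sum_congr rfl fun i _ => Finset.sum_congr rfl fun j _ => ?_
  simp only [rho, Matrix.of_apply]
  rcases lt_trichotomy i j with h | h | h
  · rw [if_pos h, if_pos h]
  · subst h; simp
  · rw [if_neg (asymm h), if_pos h, if_neg (asymm h), if_pos h]; ring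

lemma symPart_rho (M : Mx n) : symPart (rho M) = rho (skewPart M) := by
  ext i j
  simp only [symPart, skewPart, rho, Matrix.of_apply, Matrix.add_apply, Matrix.sub_apply,
    Matrix.smul_apply, Matrix.transpose_apply, smul_eq_mul]
  rcases lt_trichotomy i j with h | h | h
  · simp only [if_pos h, if_neg (asymm h)]; ring
  · subst h; simp
  · simp only [if_pos h, if_neg (asymm h)]; ring

lemma rho_skew_t (L : Mx n) : (rho (skewPart L))ᵀ = rho (skewPart L) := by
  ext i j
  simp only [Matrix.transpose_apply, rho, skewPart, Matrix.of_apply, Matrix.smul_apply,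
    Matrix.sub_apply, smul_eq_mul]
  rcases lt_trichotomy i j with h | h | h
  · simp only [if_pos h, if_neg (asymm h)]; ring
  · subst h; simp
  · simp only [if_pos h, if_neg (asymm h)]; ring

lemma aMap_t (M : Mx n) : (aMap M)ᵀ = -(aMap M) := by
  ext i j
  simp only [aMap, Matrix.transpose_apply, rho, symPart, Matrix.of_apply, Matrix.smul_apply,
    Matrix.add_apply, Matrix.neg_apply, smul_eq_mul]
  rcases lt_trichotomy i j with h | h | h
  · simp only [if_pos h, if_neg (asymm h)]; ring
  · subst h; simp
  · simp only [if_pos h, if_neg (asymm h)]; ring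

lemma form_dbr (X P Y : Mx n) :
    form X (dbr P Y) = form Y (symPart (mcomm P X) - skewPart (mcomm Pᵀ X)) := by
  rw [dbr_eq, form_sub_right,
    show mcomm Pᵀ (symPart Y) = Pᵀ * symPart Y - symPart Y * Pᵀ from rfl,
    show mcomm P (skewPart Y) = P * skewPart Y - skewPart Y * P from rfl,
    form_sub_right, form_sub_right,
    form_mul_left Pᵀ, transpose_transpose, form_mul_right Pᵀ, transpose_transpose,
    form_mul_left P, form_mul_right P,
    form_symPart_right, form_symPart_right, form_skewPart_right, form_skewPart_right,
    form_comm Y,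
    show mcomm P X = P * X - X * P from rfl,
    show mcomm Pᵀ X = Pᵀ * X - X * Pᵀ from rfl,
    symPart_sub, skewPart_sub, form_sub_left, form_sub_left, form_sub_left]

lemma form_odot (X P Y : Mx n) :
    form X (odot P Y) = form Y (symPart (jord Pᵀ X) + skewPart (jord P X)) := by
  conv_lhs => rw [odot_eq]
  conv_lhs => simp only [form_add_right, form_jord, transpose_transpose,
    form_symPart_right, form_skewPart_right]
  conv_rhs => rw [form_comm]
  conv_rhs => simp only [form_add_left]

set_option maxHeartbeats 1000000 in
lemma skewW (L F : Mx n) :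
    skewPart (symPart (mcomm F L) - skewPart (mcomm Fᵀ L)) = skewPart (dbr L F) := by
  simp only [dbr, mcomm, symPart, skewPart, transpose_add, transpose_sub, transpose_smul,
    transpose_neg, transpose_mul, transpose_transpose, smul_add, smul_sub, Matrix.smul_mul,
    Matrix.mul_smul, smul_smul, mul_add, add_mul, mul_sub, sub_mul]
  module

set_option maxHeartbeats 4000000 in
lemma key (L F R a u : Mx n) (hR : Rᵀ = R) (ha : aᵀ = -a) (hu : uᵀ = u) :
    odot L (dbr R F) - dbr L (odot R F) - dbr L a - odot L u
      = (symPart (mcomm F (odot L R)) - skewPart (mcomm Fᵀ (odot L R)))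
        - ((symPart (mcomm (odot R F + a) L) - skewPart (mcomm (odot R F + a)ᵀ L))
          + ((symPart (jord Rᵀ (symPart (mcomm F L) - skewPart (mcomm Fᵀ L)))
              + skewPart (jord R (symPart (mcomm F L) - skewPart (mcomm Fᵀ L))))
            + (symPart (jord Lᵀ u) + skewPart (jord L u)))) := by
  simp only [odot, dbr, jord, mcomm, symPart, skewPart, transpose_add, transpose_sub,
    transpose_smul, transpose_mul, transpose_transpose, transpose_neg, hR, ha, hu, smul_add,
    smul_sub, Matrix.smul_mul, Matrix.mul_smul, smul_smul, mul_add, add_mul, mul_sub, sub_mul,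
    mul_neg, neg_mul, smul_neg, neg_add, neg_sub, neg_neg, mul_assoc]
  module

end SkAux

open SkAux in
/-- The key algebraic identity of the Appendix: the final form of the Sklyanin
bracket carried to gl(n) through the isomorphism Φ. -/
theorem stmt_16 {n : ℕ} (L F G : Matrix (Fin n) (Fin n) ℝ) :
    form G (odot L (dbr (rho (skewPart L)) F)
        - dbr L (odot (rho (skewPart L)) F)
        - dbr L (aMap (odot L F))
        - odot L (rho (skewPart (dbr L F))))
      = form (odot L (rho (skewPart L))) (dbr F G)
        - form L (dbr (odot (rho (skewPart L)) F + aMap (odot L F)) G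
            + dbr F (odot (rho (skewPart L)) G + aMap (odot L G))) := by
  have hR := rho_skew_t L
  have ha := aMap_t (odot L F)
  have hu := rho_skew_t (dbr L F)
  set R := rho (skewPart L) with hRdef
  set a := aMap (odot L F) with hadef
  set u := rho (skewPart (dbr L F)) with hudef
  have h5 : form (aMap (odot L G)) (symPart (mcomm F L) - skewPart (mcomm Fᵀ L))
      = form G (symPart (jord Lᵀ u) + skewPart (jord L u)) := by
    rw [show aMap (odot L G) = rho (symPart (odot L G)) from rfl, rho_adjoint,
      ← form_symPart_right, symPart_rho, skewW L F, ← hudef, form_comm, form_odot]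
  rw [form_add_right L, form_dbr (odot L R) F G, form_dbr L (odot R F + a) G,
    form_dbr L F (odot R G + aMap (odot L G)), form_add_left,
    form_comm (odot R G), form_odot _ R G, h5,
    ← form_add_right, ← form_add_right, ← form_sub_right]
  exact congrArg (form G) (key L F R a u hR ha hu)
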